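/- Computational completeness for ℜ: for every formula φ₀ of 𝓛, if there exist a Kripke model ⟨W, →, ⊩⟩ and a world w ∈ W with w ⊮ φ₀, then φ₀ is not a tautology of the standard enumeration ζ of nondeterministic partial recursive functions. -/

import Mathlib

/-!
A finite Kripke model is embedded into the standard enumeration: by the recursion theorem there
are machines `N w`, one for each world, such that on input `N a` the machine `N w` can halt with
exactly the outputs `N b` for `a →_w b`, and diverges on every other input. Interpreting each
variable `p` as the set of codes of the worlds forcing `p`, the codes of the worlds forcing a
formula are exactly the codes lying in its interpretation, so a world refuting `φ₀` yields a
number outside `φ₀*`.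
-/

/-- Formulas of the modal language 𝓛: propositional variables, ⊥, →, and ▷. -/
inductive Formula : Type
  | var : ℕ → Formula
  | bot : Formula
  | imp : Formula → Formula → Formula
  | tri : Formula → Formula → Formula
deriving DecidableEq

namespace Formula

/-- ¬φ := φ → ⊥ -/
def neg (φ : Formula) : Formula := imp φ bot
/-- ⊤ := ¬⊥ -/
def top : Formula := neg bot
/-- φ ∨ ψ := ¬φ → ψ -/
def disj (φ ψ : Formula) : Formula := imp (neg φ) ψ
/-- φ ∧ ψ := ¬(φ → ¬ψ) -/
def conj (φ ψ : Formula) : Formula := neg (imp φ (neg ψ))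

/-- `φ` is a substitution instance of a classical propositional tautology:
it evaluates to `true` under every boolean valuation of formulas that
respects `⊥` and `→` (variables and `▷`-formulas are treated as atoms). -/
def IsPropTaut (φ : Formula) : Prop :=
  ∀ v : Formula → Bool, v bot = false →
    (∀ a b, v (imp a b) = (!(v a) || v b)) → v φ = true

/-- Hilbert-style provability.  `Prv false` is the logic ℜ (axioms: classical
tautologies, A1, A2, A3; rules: Modus Ponens and monotonicity M);
`Prv true` is the logic ℜ_d, which additionally has axiom A4. -/
inductive Prv : Bool → Formula → Prop
  | taut {d : Bool} {φ} : IsPropTaut φ → Prv d φ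
  | a1 {d : Bool} (φ ψ χ) : Prv d (imp (tri φ ψ) (imp (tri χ ψ) (tri (disj φ χ) ψ)))
  | a2 {d : Bool} (φ) : Prv d (tri bot φ)
  | a3 {d : Bool} (φ) : Prv d (tri φ top)
  | a4 (φ ψ χ) : Prv true (imp (tri φ ψ) (imp (tri φ χ) (tri φ (conj ψ χ))))
  | mp {d : Bool} {φ ψ} : Prv d (imp φ ψ) → Prv d φ → Prv d ψ
  | mono {d : Bool} {φ₁ φ₂ ψ₁ ψ₂} : Prv d (imp φ₁ φ₂) → Prv d (imp ψ₁ ψ₂) →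
      Prv d (imp (tri φ₂ ψ₁) (tri φ₁ ψ₂))

/-- `Deriv d Δ φ`: φ is derivable from the hypotheses Δ together with all
theorems of the logic (`Prv d`) using only Modus Ponens. -/
inductive Deriv (d : Bool) (Δ : Set Formula) : Formula → Prop
  | hyp {φ} : φ ∈ Δ → Deriv d Δ φ
  | thm {φ} : Prv d φ → Deriv d Δ φ
  | mp {φ ψ} : Deriv d Δ (imp φ ψ) → Deriv d Δ φ → Deriv d Δ ψ

/-- Conjunction of a list of formulas (empty conjunction is ⊤). -/
def conjList : List Formula → Formula
  | [] => top
  | φ :: l => conj φ (conjList l)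

/-- ⋀Γ : conjunction of all formulas of a finite set Γ (⋀∅ = ⊤). -/
noncomputable def bigConj (Γ : Finset Formula) : Formula := conjList Γ.toList

/-- A set of formulas is consistent if ⊥ is not derivable from it. -/
def Consistent (d : Bool) (Δ : Set Formula) : Prop := ¬ Deriv d Δ bot

/-- The pair (u,v) is w-consistent: w ⊬ ⋀u ▷ ¬⋀v. -/
def WCons (d : Bool) (w : Set Formula) (u v : Finset Formula) : Prop :=
  ¬ Deriv d w (tri (bigConj u) (neg (bigConj v)))

/-- The operation ∼: ∼(¬φ) = φ, and ∼φ = ¬φ if φ is not a negation. -/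
def simNeg : Formula → Formula
  | imp φ bot => φ
  | φ => neg φ

/-- Φ is closed under subformulas. -/
def SubClosed (Φ : Finset Formula) : Prop :=
  (∀ a b, imp a b ∈ Φ → a ∈ Φ ∧ b ∈ Φ) ∧ (∀ a b, tri a b ∈ Φ → a ∈ Φ ∧ b ∈ Φ)

/-- Φ is closed under the operation ∼. -/
def SimClosed (Φ : Finset Formula) : Prop := ∀ φ ∈ Φ, simNeg φ ∈ Φ

/-- w is a maximal consistent subset of Φ: w ⊆ Φ, w is consistent, and for
every φ ∈ Φ either φ ∈ w or ∼φ ∈ w. -/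
def MaxCons (d : Bool) (Φ : Finset Formula) (w : Finset Formula) : Prop :=
  w ⊆ Φ ∧ Consistent d ↑w ∧ ∀ φ ∈ Φ, φ ∈ w ∨ simNeg φ ∈ w

/-- Kripke forcing: `rel w u v` means u →_w v, `val w p` means w ⊩ p. -/
def Forces {W : Type*} (rel : W → W → W → Prop) (val : W → ℕ → Prop) :
    W → Formula → Prop
  | w, var p => val w p
  | _, bot => False
  | w, imp a b => Forces rel val w a → Forces rel val w b
  | w, tri a b => ∀ u v, rel w u v → Forces rel val u a →
      ∃ v', rel w u v' ∧ Forces rel val v' b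

end Formula

/-- A Kripke model: a finite set of worlds, a ternary computability relation,
and a forcing relation between worlds and propositional variables. -/
structure KripkeModel where
  W : Type
  fin : Finite W
  rel : W → W → W → Prop
  val : W → ℕ → Prop

/-- A Kripke model is deterministic if for all worlds w, u there is at most
one v with u →_w v. -/
def KripkeModel.Deterministic (M : KripkeModel) : Prop :=
  ∀ w u v v', M.rel w u v → M.rel w u v' → v = v'

/-- Forcing in a Kripke model. -/
def KripkeModel.Forces (M : KripkeModel) : M.W → Formula → Prop :=
  Formula.Forces M.rel M.val

/-- The standard enumeration of nondeterministic partial recursive functions: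
ζ_w(u) = the set of possible outputs of machine (code) w on input u. -/
def zeta (w u : ℕ) : Set ℕ :=
  {v | ((Denumerable.ofNat Nat.Partrec.Code w).eval (Nat.pair u v)).Dom}

/-- The standard enumeration of deterministic partial recursive functions:
ξ_w(u) = the value of the partial recursive function with code w on input u. -/
def xi (w u : ℕ) : Part ℕ :=
  (Denumerable.ofNat Nat.Partrec.Code w).eval u

namespace Formula

/-- Set semantics for nondeterministic partial recursive functions
(existential reading of ▷). -/
def semN (val : ℕ → Set ℕ) : Formula → Set ℕ
  | var p => val p
  | bot => ∅
  | imp a b => (Set.univ \ semN val a) ∪ semN val b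
  | tri a b => {w | ∀ u ∈ semN val a, zeta w u ≠ ∅ → zeta w u ∩ semN val b ≠ ∅}

/-- Set semantics for deterministic partial recursive functions. -/
def semD (val : ℕ → Set ℕ) : Formula → Set ℕ
  | var p => val p
  | bot => ∅
  | imp a b => (Set.univ \ semD val a) ∪ semD val b
  | tri a b => {w | ∀ u ∈ semD val a, ∀ h : (xi w u).Dom, (xi w u).get h ∈ semD val b}

/-- Universal set semantics for nondeterministic partial recursive functions:
every terminating computation path from φ* ends in ψ*. -/
def semU (val : ℕ → Set ℕ) : Formula → Set ℕ
  | var p => val p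
  | bot => ∅
  | imp a b => (Set.univ \ semU val a) ∪ semU val b
  | tri a b => {w | ∀ u ∈ semU val a, zeta w u ⊆ semU val b}

/-- A canonical injective encoding of formulas as natural numbers. -/
def enc : Formula → ℕ
  | var n => 4 * n
  | bot => 1
  | imp a b => 4 * Nat.pair (enc a) (enc b) + 2
  | tri a b => 4 * Nat.pair (enc a) (enc b) + 3

end Formula

open Formula Nat.Partrec

def IsZetaRealization {W : Type*} (R : W → W → W → Prop) (N : W → ℕ) : Prop :=
  Function.Injective N ∧ ∀ w u, zeta (N w) u = {v | ∃ a b, R w a b ∧ N a = u ∧ N b = v}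

/-- Kleene's recursion theorem for a primitive recursive halting condition. -/
theorem exists_code_eval_dom_iff {P : Code → ℕ → Prop} (hP : PrimrecRel P) :
    ∃ c : Code, ∀ x, (c.eval x).Dom ↔ P c x := by
  classical
  let f : Code → ℕ →. ℕ := fun c x =>
    ((if P c x then some 0 else Option.none : Option ℕ) : Part ℕ)
  have hf : Partrec₂ f := Computable.ofOption (Primrec.ite hP
    (Primrec.const (some 0 : Option ℕ)) (Primrec.const (Option.none : Option ℕ))).to_comp
  obtain ⟨c, hc⟩ := Code.fixed_point₂ hf
  refine ⟨c, fun x => ?_⟩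
  rw [hc]
  by_cases h : P c x <;> simp [f, h]

def curryTripleCode (c : Code) (t : ℕ × ℕ × ℕ) : ℕ :=
  Nat.pair t.1 (Nat.pair (Encodable.encode (Code.curry c t.2.1))
    (Encodable.encode (Code.curry c t.2.2)))

theorem primrec₂_curryTripleCode : Primrec₂ curryTripleCode :=
  Primrec₂.natPair.comp (Primrec.fst.comp Primrec.snd) (Primrec₂.natPair.comp
    (Primrec.encode.comp (Code.primrec₂_curry.comp Primrec.fst
      (Primrec.fst.comp (Primrec.snd.comp Primrec.snd))))
    (Primrec.encode.comp (Code.primrec₂_curry.comp Primrec.fst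
      (Primrec.snd.comp (Primrec.snd.comp Primrec.snd)))))

theorem exists_isZetaRealization_nat (T : Finset (ℕ × ℕ × ℕ)) :
    ∃ N : ℕ → ℕ, IsZetaRealization (fun i j k => (i, j, k) ∈ T) N := by
  let P : Code → ℕ → Prop := fun c x => ∃ t ∈ T.toList, x = curryTripleCode c t
  have hP : PrimrecRel P :=
    ((Primrec.eq.comp₂ (Primrec.snd.comp₂ Primrec₂.right) (primrec₂_curryTripleCode.comp₂
      (Primrec.fst.comp₂ Primrec₂.right) Primrec₂.left)).exists_mem_list.comp
        (Primrec.const T.toList) Primrec.id).primrecRel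
  -- the machine of world `i` is `curry c i`, so `c` has to know its own code
  obtain ⟨c, hc⟩ := exists_code_eval_dom_iff hP
  refine ⟨fun i => Encodable.encode (Code.curry c i), fun i j hij => ?_, fun i u => ?_⟩
  · exact (Code.curry_inj (Encodable.encode_injective hij)).2
  · ext v
    simp only [zeta, Denumerable.ofNat_encode, Code.eval_curry, hc, P, curryTripleCode,
      Set.mem_ofPred_eq, Finset.mem_toList, Prod.exists, Nat.pair_eq_pair]
    constructor
    · rintro ⟨i', j, k, hT, rfl, rfl, rfl⟩
      exact ⟨j, k, hT, rfl, rfl⟩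
    · rintro ⟨j, k, hT, rfl, rfl⟩
      exact ⟨i, j, k, hT, rfl, rfl, rfl⟩

theorem exists_isZetaRealization {W : Type*} [Finite W] (R : W → W → W → Prop) :
    ∃ N : W → ℕ, IsZetaRealization R N := by
  obtain ⟨ι, hι⟩ := Countable.exists_injective_nat W
  let code : W × W × W → ℕ × ℕ × ℕ := fun t => (ι t.1, ι t.2.1, ι t.2.2)
  have hT : (code '' {t | R t.1 t.2.1 t.2.2}).Finite := Set.toFinite _
  obtain ⟨N, hN, hz⟩ := exists_isZetaRealization_nat hT.toFinset
  refine ⟨N ∘ ι, hN.comp hι, fun w u => ?_⟩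
  ext v
  simp only [hz, Function.comp_apply, Set.Finite.mem_toFinset, Set.mem_image, Set.mem_ofPred_eq,
    code, Prod.mk.injEq, Prod.exists]
  constructor
  · rintro ⟨j, k, ⟨w', a, b, hR, hw, rfl, rfl⟩, rfl, rfl⟩
    exact ⟨a, b, hι hw ▸ hR, rfl, rfl⟩
  · rintro ⟨a, b, hR, rfl, rfl⟩
    exact ⟨ι a, ι b, ⟨w, a, b, hR, rfl, rfl, rfl⟩, rfl, rfl⟩

namespace IsZetaRealization

variable {W : Type*} {R : W → W → W → Prop} {N : W → ℕ}

theorem zeta_apply (hN : IsZetaRealization R N) (w a : W) :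
    zeta (N w) (N a) = N '' {b | R w a b} := by
  ext v
  simp only [hN.2, Set.mem_ofPred_eq, Set.mem_image, hN.1.eq_iff]
  constructor
  · rintro ⟨a', b, hR, rfl, rfl⟩
    exact ⟨b, hR, rfl⟩
  · rintro ⟨b, hR, rfl⟩
    exact ⟨a, b, hR, rfl, rfl⟩

theorem mem_range_of_nonempty (hN : IsZetaRealization R N) {w : W} {u : ℕ}
    (h : (zeta (N w) u).Nonempty) : u ∈ Set.range N := by
  obtain ⟨v, hv⟩ := h
  rw [hN.2] at hv
  obtain ⟨a, -, -, rfl, -⟩ := hv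
  exact ⟨a, rfl⟩

theorem mem_semN_iff_forces (hN : IsZetaRealization R N) (val : W → ℕ → Prop) (φ : Formula)
    (w : W) : N w ∈ semN (fun p => N '' {x | val x p}) φ ↔ Formula.Forces R val w φ := by
  induction φ generalizing w with
  | var p => exact hN.1.mem_set_image
  | bot => simp [semN, Formula.Forces]
  | imp a b iha ihb =>
    simp only [semN, Formula.Forces, Set.mem_union, Set.mem_sdiff, Set.mem_univ, true_and, ← iha,
      ← ihb]
    tauto
  | tri a b iha ihb =>
    simp only [semN, Formula.Forces, Set.mem_ofPred_eq, ← Set.nonempty_iff_ne_empty]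
    constructor
    · intro h u v hR hu
      have hne := h (N u) ((iha u).2 hu) (by rw [hN.zeta_apply]; exact ⟨N v, v, hR, rfl⟩)
      rw [hN.zeta_apply] at hne
      obtain ⟨_, ⟨v', hv', rfl⟩, hb⟩ := hne
      exact ⟨v', hv', (ihb v').1 hb⟩
    · rintro h _ hu hne
      obtain ⟨u, rfl⟩ := hN.mem_range_of_nonempty hne
      rw [hN.zeta_apply] at hne ⊢
      obtain ⟨_, ⟨v, hR, rfl⟩⟩ := hne
      obtain ⟨v', hv', hb⟩ := h u v hR ((iha u).1 hu)
      exact ⟨N v', ⟨v', hv', rfl⟩, (ihb v').2 hb⟩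

end IsZetaRealization

open Formula in
/-- Computational completeness for ℜ: if some world of some Kripke model does
not force φ₀, then φ₀ is not a tautology of the standard enumeration ζ of
nondeterministic partial recursive functions. -/
theorem computational_completeness_R (φ₀ : Formula)
    (h : ∃ (M : KripkeModel) (w : M.W), ¬ M.Forces w φ₀) :
    ¬ ∀ val : ℕ → Set ℕ, semN val φ₀ = Set.univ := by
  intro htaut
  obtain ⟨M, w, hw⟩ := h
  have := M.fin
  obtain ⟨N, hN⟩ := exists_isZetaRealization M.rel
  have hmem := htaut (fun p => N '' {x | M.val x p}) ▸ Set.mem_univ (N w)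
  exact hw ((hN.mem_semN_iff_forces M.val φ₀ w).1 hmem)
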